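/- Let Δ > 0 and ε > 0, and let a, a' ∈ ℝ satisfy |a − a'| ≤ Δ. Let μ_a (respectively μ_{a'}) be the measure on ℝ with density r ↦ (ε/(2Δ)) · exp(−(ε/Δ)·|r − a|) (respectively r ↦ (ε/(2Δ)) · exp(−(ε/Δ)·|r − a'|)) with respect to Lebesgue measure. Then for every measurable set S ⊆ ℝ, μ_a(S) ≤ exp(ε) · μ_{a'}(S). -/
import Mathlib

open MeasureTheory

/-- Let Δ > 0, ε > 0, |a − a'| ≤ Δ. Let μ_a (resp. μ_{a'}) be the measure on ℝ
with density r ↦ (ε/(2Δ))·exp(−(ε/Δ)·|r − a|) (resp. with a') w.r.t. Lebesgue measure.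
Then for every measurable S ⊆ ℝ, μ_a(S) ≤ exp(ε) · μ_{a'}(S). -/
theorem laplace_mechanism_diff_private (Δ ε a a' : ℝ) (hΔ : 0 < Δ) (hε : 0 < ε)
    (h : |a - a'| ≤ Δ) (S : Set ℝ) (hS : MeasurableSet S) :
    (volume.withDensity
        (fun r : ℝ => ENNReal.ofReal ((ε / (2 * Δ)) * Real.exp (-(ε / Δ) * |r - a|)))) S ≤
      ENNReal.ofReal (Real.exp ε) *
        (volume.withDensity
          (fun r : ℝ => ENNReal.ofReal ((ε / (2 * Δ)) * Real.exp (-(ε / Δ) * |r - a'|)))) S := by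
  rw [withDensity_apply _ hS, withDensity_apply _ hS, ← lintegral_const_mul' _ _ (by simp)]
  refine lintegral_mono fun r => ?_
  rw [← ENNReal.ofReal_mul (Real.exp_nonneg _)]
  refine ENNReal.ofReal_le_ofReal ?_
  have hc : 0 ≤ ε / (2 * Δ) := by positivity
  rw [show Real.exp ε * (ε / (2 * Δ) * Real.exp (-(ε / Δ) * |r - a'|))
      = ε / (2 * Δ) * (Real.exp ε * Real.exp (-(ε / Δ) * |r - a'|)) by ring,
    ← Real.exp_add]
  refine mul_le_mul_of_nonneg_left (Real.exp_le_exp.mpr ?_) hc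
  have htri : |r - a'| - |a - a'| ≤ |r - a| := by
    have h1 := abs_sub_abs_le_abs_sub (r - a') (r - a)
    have h2 : (r - a') - (r - a) = a - a' := by ring
    rw [h2, abs_sub_comm a a'] at h1
    rw [abs_sub_comm a a']
    linarith
  have hεΔ : 0 < ε / Δ := by positivity
  nlinarith [abs_nonneg (r - a'), abs_nonneg (r - a), mul_le_mul_of_nonneg_left h (le_of_lt hεΔ), div_mul_cancel₀ ε (ne_of_gt hΔ)]
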